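/- Let D be an Enriques diagram and suppose p and q are two distinct minimal elements (with respect to the tree order of D) of a subset C of vertices of D. Let w be the maximal vertex of D such that both p and q are infinitely near or equal to w (i.e., w ≤ p and w ≤ q and w is maximal with this property). Then in the dual graph Γ_D, the chain between p and q is the union ch(q,w) ∪ ch(w,p); in particular, w lies on the path between p and q in Γ_D. -/

import Mathlib

/-!
The dual graph `Γ_D` is a tree. Indeed, every vertex above `v` is joined to `v` by a walk
staying above `v`, and `c ↦ {pred c, tip c}`, where `tip c` is the last vertex above `c`
proximate to `pred c`, is a bijection from the non-root vertices onto the edges; `tip c` is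
well defined because, by `third_unique`, the vertices proximate to `b` above a common
successor of `b` form a chain.

Hence the path from `q` to `p` stays above `w`. If `w ≠ p`, let `c` be the successor of `w`
towards `p`: the path starts outside the subtree above `c` and ends inside it, and an edge of
`Γ_D` entering that subtree starts at a vertex below `pred c = w`, which on this path can only
be `w`. Uniqueness of paths in a tree then splits the path at `w`.
-/

/-- An Enriques diagram: a finite rooted tree (partial order `le`, each non-root
vertex with immediate predecessor `pred`) with a proximity relation `prox`
satisfying the standard axioms. -/
structure EnriquesDiagram (V : Type) [Fintype V] [DecidableEq V] where
  le : V → V → Prop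
  le_refl : ∀ a, le a a
  le_trans : ∀ a b c, le a b → le b c → le a c
  le_antisymm : ∀ a b, le a b → le b a → a = b
  root : V
  root_le : ∀ v, le root v
  pred : V → V
  pred_le : ∀ v, v ≠ root → le (pred v) v
  pred_ne : ∀ v, v ≠ root → pred v ≠ v
  pred_max : ∀ v q, v ≠ root → le q v → q ≠ v → le q (pred v)
  prox : V → V → Prop
  prox_pred : ∀ v, v ≠ root → prox v (pred v)
  root_not_prox : ∀ q, ¬ prox root q
  prox_gt : ∀ p q, prox p q → le q p ∧ p ≠ q
  prox_at_most_two : ∀ p a b c, prox p a → prox p b → prox p c → a = b ∨ b = c ∨ a = c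
  third_unique : ∀ p q a b, prox p q → prox a p → prox a q → prox b p → prox b q → a = b
  prox_pred_prox : ∀ p q', p ≠ root → prox p q' → q' ≠ pred p → prox (pred p) q'

namespace EnriquesDiagram

variable {V : Type} [Fintype V] [DecidableEq V] (D : EnriquesDiagram V)

/-- Number of vertices of `D` proximate to `p`. -/
noncomputable def r (p : V) : ℕ := Set.ncard {q | D.prox q p}

/-- Weight of `p` in the dual graph: `r p + 1`. -/
noncomputable def omega (p : V) : ℕ := D.r p + 1

/-- `p` is extremal: it has no successor. -/
def Extremal (p : V) : Prop := ∀ q, D.le p q → q = p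

/-- `p` is free: proximate to exactly one vertex. -/
def Free (p : V) : Prop := ∃! q, D.prox p q

/-- `p` is satellite: proximate to two distinct vertices. -/
def Satellite (p : V) : Prop := ∃ q₁ q₂, q₁ ≠ q₂ ∧ D.prox p q₁ ∧ D.prox p q₂

/-- `p` is maximal among the vertices of `D` proximate to `q`. -/
def MaxProx (p q : V) : Prop := D.prox p q ∧ ∀ u, D.prox u q → D.le p u → u = p

/-- The dual graph `Γ_D`: `p` and `q` are adjacent iff one is maximal among the
vertices proximate to the other. -/
def dualGraph : SimpleGraph V where
  Adj p q := p ≠ q ∧ (D.MaxProx p q ∨ D.MaxProx q p)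
  symm := by
    constructor
    intro p q h
    exact ⟨h.1.symm, h.2.symm⟩
  loopless := by
    constructor
    intro p h
    exact h.1 rfl

end EnriquesDiagram

namespace SimpleGraph

variable {V : Type*} {G : SimpleGraph V}

lemma IsAcyclic.support_subset_of_isPath [DecidableEq V] (hG : G.IsAcyclic) {u v : V}
    (q : G.Walk u v) {p : G.Walk u v} (hp : p.IsPath) : p.support ⊆ q.support := by
  have : p = q.bypass :=
    congrArg Subtype.val ((hG.subsingleton_path u v).elim ⟨p, hp⟩ ⟨_, q.bypass_isPath⟩)
  exact this ▸ q.support_bypass_subset_support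

lemma IsAcyclic.mem_support_iff_of_mem_support [DecidableEq V] (hG : G.IsAcyclic)
    {u v w : V} {p : G.Walk u v} (hp : p.IsPath) (hw : w ∈ p.support)
    {p₁ : G.Walk u w} (hp₁ : p₁.IsPath) {p₂ : G.Walk w v} (hp₂ : p₂.IsPath) (x : V) :
    x ∈ p.support ↔ x ∈ p₁.support ∨ x ∈ p₂.support := by
  obtain rfl : p₁ = p.takeUntil w hw :=
    congrArg Subtype.val ((hG.subsingleton_path u w).elim ⟨p₁, hp₁⟩ ⟨_, hp.takeUntil hw⟩)
  obtain rfl : p₂ = p.dropUntil w hw :=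
    congrArg Subtype.val ((hG.subsingleton_path w v).elim ⟨p₂, hp₂⟩ ⟨_, hp.dropUntil hw⟩)
  conv_lhs => rw [← p.take_spec hw]
  exact Walk.mem_support_append_iff _ _

end SimpleGraph

namespace EnriquesDiagram

variable {V : Type} [Fintype V] [DecidableEq V] (D : EnriquesDiagram V)

def Lt (a b : V) : Prop := D.le a b ∧ a ≠ b

variable {D}

lemma Lt.le {a b : V} (h : D.Lt a b) : D.le a b := h.1

lemma Lt.trans {a b c : V} (hab : D.Lt a b) (hbc : D.Lt b c) : D.Lt a c :=
  ⟨D.le_trans _ _ _ hab.1 hbc.1, fun h => hab.2 (D.le_antisymm _ _ hab.1 (h ▸ hbc.1))⟩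

lemma Lt.trans_le {a b c : V} (hab : D.Lt a b) (hbc : D.le b c) : D.Lt a c :=
  ⟨D.le_trans _ _ _ hab.1 hbc, fun h => hab.2 (D.le_antisymm _ _ hab.1 (h ▸ hbc))⟩

lemma Lt.ne_root {a b : V} (h : D.Lt a b) : b ≠ D.root := fun hb =>
  h.2 (D.le_antisymm _ _ h.1 (hb ▸ D.root_le a))

lemma Lt.le_pred {a b : V} (h : D.Lt a b) : D.le a (D.pred b) :=
  D.pred_max b a h.ne_root h.1 h.2

lemma not_le_of_lt {a b : V} (h : D.Lt a b) : ¬ D.le b a := fun hba =>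
  h.2 (D.le_antisymm _ _ h.1 hba)

variable (D)

lemma pred_lt {v : V} (hv : v ≠ D.root) : D.Lt (D.pred v) v :=
  ⟨D.pred_le v hv, D.pred_ne v hv⟩

lemma wellFounded_lt : WellFounded D.Lt := by
  have : IsTrans V D.Lt := ⟨fun _ _ _ => Lt.trans⟩
  have : Std.Irrefl D.Lt := ⟨fun _ h => h.2 rfl⟩
  exact Finite.wellFounded_of_trans_of_irrefl _

lemma wellFounded_gt : WellFounded (flip D.Lt) := by
  have : IsTrans V (flip D.Lt) := ⟨fun _ _ _ h₁ h₂ => Lt.trans h₂ h₁⟩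
  have : Std.Irrefl (flip D.Lt) := ⟨fun _ h => h.2 rfl⟩
  exact Finite.wellFounded_of_trans_of_irrefl _

lemma le_total_of_le {x y z : V} (hx : D.le x z) (hy : D.le y z) : D.le x y ∨ D.le y x := by
  induction z using D.wellFounded_lt.induction with
  | _ z ih =>
    by_cases hxz : x = z
    · exact Or.inr (hxz ▸ hy)
    by_cases hyz : y = z
    · exact Or.inl (hyz ▸ hx)
    have hx' : D.Lt x z := ⟨hx, hxz⟩
    exact ih _ (D.pred_lt hx'.ne_root) hx'.le_pred (Lt.le_pred ⟨hy, hyz⟩)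

lemma prox_of_lt_of_le {a b x : V} (hab : D.prox a b) (hbx : D.Lt b x) (hxa : D.le x a) :
    D.prox x b := by
  induction a using D.wellFounded_lt.induction with
  | _ a ih =>
    by_cases hxa' : x = a
    · exact hxa' ▸ hab
    have ha : a ≠ D.root := fun h => D.root_not_prox b (h ▸ hab)
    have hba : b ≠ D.pred a := fun h => not_le_of_lt hbx (h ▸ Lt.le_pred ⟨hxa, hxa'⟩)
    exact ih _ (D.pred_lt ha) (D.prox_pred_prox a b ha hab hba) (Lt.le_pred ⟨hxa, hxa'⟩)

lemma exists_pred_eq_of_lt {v x : V} (h : D.Lt v x) :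
    ∃ c, c ≠ D.root ∧ D.pred c = v ∧ D.le c x := by
  induction x using D.wellFounded_lt.induction with
  | _ x ih =>
    by_cases hx : D.pred x = v
    · exact ⟨x, h.ne_root, hx, D.le_refl x⟩
    obtain ⟨c, hc, hcv, hcx⟩ := ih _ (D.pred_lt h.ne_root) ⟨h.le_pred, fun h' => hx h'.symm⟩
    exact ⟨c, hc, hcv, D.le_trans _ _ _ hcx (D.pred_lt h.ne_root).le⟩

lemma exists_maximal {S : Set V} (hS : S.Nonempty) : ∃ m ∈ S, ∀ z ∈ S, ¬ D.Lt m z :=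
  D.wellFounded_gt.has_min S hS

lemma exists_greatest_common_le (x y : V) :
    ∃ m, D.le m x ∧ D.le m y ∧ ∀ z, D.le z x → D.le z y → D.le z m := by
  obtain ⟨m, ⟨hmx, hmy⟩, hmax⟩ :=
    D.exists_maximal (S := {z | D.le z x ∧ D.le z y}) ⟨D.root, D.root_le x, D.root_le y⟩
  refine ⟨m, hmx, hmy, fun z hzx hzy => ?_⟩
  rcases D.le_total_of_le hzx hmx with hzm | hmz
  · exact hzm
  by_cases hzm : z = m
  · exact hzm ▸ D.le_refl z
  exact absurd ⟨hmz, fun h => hzm h.symm⟩ (hmax z ⟨hzx, hzy⟩)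

lemma le_total_of_prox {b x y z : V} (hx : D.prox x b) (hy : D.prox y b) (hbz : D.Lt b z)
    (hzx : D.le z x) (hzy : D.le z y) : D.le x y ∨ D.le y x := by
  obtain ⟨m, hmx, hmy, hmax⟩ := D.exists_greatest_common_le x y
  have hbm : D.Lt b m := hbz.trans_le (hmax z hzx hzy)
  by_cases hmx' : m = x
  · exact Or.inl (hmx' ▸ hmy)
  by_cases hmy' : m = y
  · exact Or.inr (hmy' ▸ hmx)
  obtain ⟨c, hc, rfl, hcx⟩ := D.exists_pred_eq_of_lt ⟨hmx, hmx'⟩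
  obtain ⟨d, hd, hdm, hdy⟩ := D.exists_pred_eq_of_lt ⟨hmy, hmy'⟩
  have hbd : D.Lt b d := hbm.trans (hdm ▸ D.pred_lt hd)
  -- `c` and `d` are both proximate to `b` and to `pred c`, so they coincide
  have hcd : c = d := D.third_unique (D.pred c) b c d (D.prox_of_lt_of_le hx hbm hmx)
    (D.prox_pred c hc) (D.prox_of_lt_of_le hx (hbm.trans (D.pred_lt hc)) hcx)
    (hdm ▸ D.prox_pred d hd) (D.prox_of_lt_of_le hy hbd hdy)
  exact absurd (hmax c hcx (hcd ▸ hdy)) (not_le_of_lt (D.pred_lt hc))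

lemma lt_of_prox {p q : V} (h : D.prox p q) : D.Lt q p :=
  ⟨(D.prox_gt p q h).1, (D.prox_gt p q h).2.symm⟩

lemma exists_maxProx_pred {c : V} (hc : c ≠ D.root) :
    ∃ t, D.MaxProx t (D.pred c) ∧ D.le c t := by
  obtain ⟨t, ⟨htc, hct⟩, hmax⟩ := D.exists_maximal (S := {u | D.prox u (D.pred c) ∧ D.le c u})
    ⟨c, D.prox_pred c hc, D.le_refl c⟩
  refine ⟨t, ⟨htc, fun u hu htu => ?_⟩, hct⟩
  by_contra hut
  exact hmax u ⟨hu, D.le_trans _ _ _ hct htu⟩ ⟨htu, fun h => hut h.symm⟩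

lemma maxProx_pred_unique {c t t' : V} (hc : c ≠ D.root)
    (ht : D.MaxProx t (D.pred c)) (hct : D.le c t)
    (ht' : D.MaxProx t' (D.pred c)) (hct' : D.le c t') : t = t' := by
  rcases D.le_total_of_prox ht.1 ht'.1 (D.pred_lt hc) hct hct' with h | h
  · exact (ht.2 t' ht'.1 h).symm
  · exact ht'.2 t ht.1 h

noncomputable def tip (c : V) : V :=
  if h : c ≠ D.root then (D.exists_maxProx_pred h).choose else c

lemma maxProx_tip {c : V} (hc : c ≠ D.root) : D.MaxProx (D.tip c) (D.pred c) := by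
  rw [tip, dif_pos hc]
  exact (D.exists_maxProx_pred hc).choose_spec.1

lemma le_tip {c : V} (hc : c ≠ D.root) : D.le c (D.tip c) := by
  rw [tip, dif_pos hc]
  exact (D.exists_maxProx_pred hc).choose_spec.2

lemma tip_eq {c t : V} (hc : c ≠ D.root) (ht : D.MaxProx t (D.pred c)) (hct : D.le c t) :
    D.tip c = t :=
  D.maxProx_pred_unique hc (D.maxProx_tip hc) (D.le_tip hc) ht hct

lemma pred_lt_tip {c : V} (hc : c ≠ D.root) : D.Lt (D.pred c) (D.tip c) :=
  D.lt_of_prox (D.maxProx_tip hc).1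

lemma adj_pred_tip {c : V} (hc : c ≠ D.root) : D.dualGraph.Adj (D.pred c) (D.tip c) :=
  ⟨(D.pred_lt_tip hc).2, Or.inr (D.maxProx_tip hc)⟩

lemma exists_walk_of_le {v x : V} (hvx : D.le v x) :
    ∃ wk : D.dualGraph.Walk x v, ∀ u ∈ wk.support, D.le v u := by
  induction v using D.wellFounded_gt.induction generalizing x with
  | _ v ih =>
    by_cases hxv : x = v
    · subst hxv
      exact ⟨.nil, by simp [D.le_refl]⟩
    obtain ⟨c, hc, rfl, hcx⟩ := D.exists_pred_eq_of_lt ⟨hvx, fun h => hxv h.symm⟩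
    obtain ⟨w₁, hw₁⟩ := ih c (D.pred_lt hc) hcx
    obtain ⟨w₂, hw₂⟩ := ih c (D.pred_lt hc) (D.le_tip hc)
    refine ⟨w₁.append (w₂.reverse.concat (D.adj_pred_tip hc).symm), fun u hu => ?_⟩
    simp only [SimpleGraph.Walk.mem_support_append_iff, SimpleGraph.Walk.support_concat,
      SimpleGraph.Walk.support_reverse, List.mem_append, List.mem_reverse,
      List.mem_singleton] at hu
    rcases hu with hu | hu | rfl
    · exact D.le_trans _ _ _ (D.pred_lt hc).le (hw₁ u hu)
    · exact D.le_trans _ _ _ (D.pred_lt hc).le (hw₂ u hu)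
    · exact D.le_refl _

lemma dualGraph_connected : D.dualGraph.Connected := by
  have : Nonempty V := ⟨D.root⟩
  refine ⟨fun u v => ?_⟩
  obtain ⟨w₁, -⟩ := D.exists_walk_of_le (D.root_le u)
  obtain ⟨w₂, -⟩ := D.exists_walk_of_le (D.root_le v)
  exact ⟨w₁.append w₂.reverse⟩

lemma image_sym2_pred_tip :
    (fun c => s(D.pred c, D.tip c)) '' {D.root}ᶜ = D.dualGraph.edgeSet := by
  ext e
  induction e using Sym2.ind with
  | _ a b =>
    constructor
    · rintro ⟨c, hc, he⟩
      exact he ▸ D.adj_pred_tip hc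
    · rintro ⟨-, hab | hba⟩
      · obtain ⟨c, hc, rfl, hca⟩ := D.exists_pred_eq_of_lt (D.lt_of_prox hab.1)
        exact ⟨c, hc, by dsimp only; rw [D.tip_eq hc hab hca, Sym2.eq_swap]⟩
      · obtain ⟨c, hc, rfl, hcb⟩ := D.exists_pred_eq_of_lt (D.lt_of_prox hba.1)
        exact ⟨c, hc, by dsimp only; rw [D.tip_eq hc hba hcb]⟩

lemma injOn_sym2_pred_tip : Set.InjOn (fun c => s(D.pred c, D.tip c)) {D.root}ᶜ := by
  intro c hc c' hc' h
  rcases Sym2.eq_iff.mp h with ⟨hp, ht⟩ | ⟨hp, ht⟩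
  · by_contra hne
    rcases D.le_total_of_le (D.le_tip hc) (ht ▸ D.le_tip hc') with h | h
    · exact not_le_of_lt (D.pred_lt hc) (hp ▸ Lt.le_pred ⟨h, hne⟩)
    · exact not_le_of_lt (D.pred_lt hc') (hp ▸ Lt.le_pred ⟨h, fun h' => hne h'.symm⟩)
  · have := (D.pred_lt_tip hc).trans_le (ht ▸ (D.pred_lt_tip hc').le)
    exact absurd (hp ▸ this) fun h' => h'.2 rfl

lemma dualGraph_isTree : D.dualGraph.IsTree := by
  refine SimpleGraph.isTree_iff_connected_and_card.mpr ⟨D.dualGraph_connected, ?_⟩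
  have := Set.ncard_add_ncard_compl {D.root}
  rw [Set.ncard_singleton] at this
  rw [Nat.card_coe_set_eq, ← D.image_sym2_pred_tip, D.injOn_sym2_pred_tip.ncard_image]
  omega

lemma le_of_mem_support_of_isPath {v x y u : V} (hx : D.le v x) (hy : D.le v y)
    {wk : D.dualGraph.Walk x y} (hwk : wk.IsPath) (hu : u ∈ wk.support) : D.le v u := by
  obtain ⟨w₁, hw₁⟩ := D.exists_walk_of_le hx
  obtain ⟨w₂, hw₂⟩ := D.exists_walk_of_le hy
  have := D.dualGraph_isTree.isAcyclic.support_subset_of_isPath (w₁.append w₂.reverse) hwk hu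
  rw [SimpleGraph.Walk.mem_support_append_iff, SimpleGraph.Walk.support_reverse,
    List.mem_reverse] at this
  exact this.elim (hw₁ u) (hw₂ u)

lemma le_pred_of_adj {a b c : V} (hab : D.dualGraph.Adj a b) (hca : ¬ D.le c a)
    (hcb : D.le c b) : D.le a (D.pred c) := by
  have hlt : D.Lt a b := by
    rcases hab.2 with h | h
    · exact absurd (D.le_trans _ _ _ hcb (D.lt_of_prox h.1).le) hca
    · exact D.lt_of_prox h.1
  rcases D.le_total_of_le hcb hlt.le with h | h
  · exact absurd h hca
  · exact Lt.le_pred ⟨h, fun h' => hca (h' ▸ D.le_refl a)⟩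

theorem meet_mem_support_of_isPath {p q w : V} (hwp : D.le w p) (hwq : D.le w q)
    (hwmax : ∀ x, D.le x p → D.le x q → D.le x w) {wk : D.dualGraph.Walk q p}
    (hwk : wk.IsPath) : w ∈ wk.support := by
  by_cases hwp' : w = p
  · exact hwp' ▸ wk.end_mem_support
  obtain ⟨c, hc, rfl, hcp⟩ := D.exists_pred_eq_of_lt ⟨hwp, hwp'⟩
  have hcq : ¬ D.le c q := fun h => not_le_of_lt (D.pred_lt hc) (hwmax c hcp h)
  obtain ⟨d, hd, hdq, hdp⟩ := wk.exists_boundary_dart {v | ¬ D.le c v} hcq (by simpa using hcp)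
  have hfst := wk.dart_fst_mem_support_of_mem_darts hd
  have : d.fst = D.pred c := D.le_antisymm _ _ (D.le_pred_of_adj d.adj hdq (not_not.mp hdp))
    (D.le_of_mem_support_of_isPath hwq hwp hwk hfst)
  exact this ▸ hfst

end EnriquesDiagram

theorem stmt17_general {V : Type} [Fintype V] [DecidableEq V] (D : EnriquesDiagram V)
    (p q w : V)
    (hwp : D.le w p) (hwq : D.le w q)
    (hwmax : ∀ x, D.le x p → D.le x q → D.le x w) :
    ∀ wk : D.dualGraph.Walk q p, wk.IsPath →
    ∀ w1 : D.dualGraph.Walk q w, w1.IsPath →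
    ∀ w2 : D.dualGraph.Walk w p, w2.IsPath →
      w ∈ wk.support ∧
      (∀ u : V, u ∈ wk.support ↔ (u ∈ w1.support ∨ u ∈ w2.support)) := by
  intro wk hwk w1 hw1 w2 hw2
  have hw := D.meet_mem_support_of_isPath hwp hwq hwmax hwk
  exact ⟨hw, D.dualGraph_isTree.isAcyclic.mem_support_iff_of_mem_support hwk hw hw1 hw2⟩

/-- If `p` and `q` are two distinct minimal elements of a subset `C` of an
Enriques diagram and `w` is the maximal common predecessor of `p` and `q`, then
the chain of the dual graph between `q` and `p` is the union of the chains from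
`q` to `w` and from `w` to `p`; in particular `w` lies on the path from `q` to
`p`. -/
theorem stmt17 {V : Type} [Fintype V] [DecidableEq V] (D : EnriquesDiagram V)
    (C : Set V) (p q w : V) (hp : p ∈ C) (hq : q ∈ C) (hpq : p ≠ q)
    (hpmin : ∀ c ∈ C, D.le c p → c = p) (hqmin : ∀ c ∈ C, D.le c q → c = q)
    (hwp : D.le w p) (hwq : D.le w q)
    (hwmax : ∀ x, D.le x p → D.le x q → D.le x w) :
    ∀ wk : D.dualGraph.Walk q p, wk.IsPath →
    ∀ w1 : D.dualGraph.Walk q w, w1.IsPath →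
    ∀ w2 : D.dualGraph.Walk w p, w2.IsPath →
      w ∈ wk.support ∧
      (∀ u : V, u ∈ wk.support ↔ (u ∈ w1.support ∨ u ∈ w2.support)) :=
  stmt17_general D p q w hwp hwq hwmax
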